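/- arXiv:1307.7017 — 3 statements merged into one kernel-verified Lean document; each statement's English description precedes it below -/
import Mathlib

section
/- Let ν: [0,1] → ℝ be such that g(x) := ν(x)/ω(x) extends to a C² function on [0,1] with g'(0) = 0, and set c₀ := |g(0)|, c₂ := sup_{x∈[0,1]} |g''(x)|. Then there exists a constant C > 0, independent of ν, such that h₁(ν) ≤ C (c₀ + c₂). -/
noncomputable section

open Real

/-- `ω(x) = 2 sin (π x / 2)`. -/
def omegaFn (x : ℝ) : ℝ := 2 * Real.sin (π * x / 2)

/-- `z(x,y) = x+y` if `x+y ≤ 1`, else `2-x-y`. -/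
def zfun (x y : ℝ) : ℝ := if x + y ≤ 1 then x + y else 2 - x - y

/-- `h₁(ν)` as a supremum in `ℝ≥0∞`. -/
def h1 (ν : ℝ → ℝ) : ENNReal :=
  sSup {r : ENNReal | ∃ τ₁ τ₂ τ₃ x y : ℝ,
    (τ₁ = 1 ∨ τ₁ = -1) ∧ (τ₂ = 1 ∨ τ₂ = -1) ∧ (τ₃ = 1 ∨ τ₃ = -1) ∧
    x ∈ Set.Icc (0 : ℝ) 1 ∧ y ∈ Set.Icc (0 : ℝ) 1 ∧
    τ₁ * omegaFn x + τ₂ * omegaFn y + τ₃ * omegaFn (zfun x y) ≠ 0 ∧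
    r = ENNReal.ofReal (|τ₁ * ν x + τ₂ * ν y + τ₃ * ν (zfun x y)| /
      |τ₁ * omegaFn x + τ₂ * omegaFn y + τ₃ * omegaFn (zfun x y)|)}

/-- Second derivative within `[0,1]`. -/
def secondDerivOn (g : ℝ → ℝ) : ℝ → ℝ :=
  derivWithin (derivWithin g (Set.Icc 0 1)) (Set.Icc (0 : ℝ) 1)

/-- `c₂ = sup_{x ∈ [0,1]} |g''(x)|`. -/
def c2sup (g : ℝ → ℝ) : ℝ := ⨆ x : Set.Icc (0 : ℝ) 1, |secondDerivOn g x.1|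

/-!
Write `ν = ω g` and, for a sign pattern `τ`, let `D = Σ τᵢ ω(pᵢ)` over the points
`p = (x, y, z(x,y))`. For every anchor `a ∈ [0,1]`,
`Σ τᵢ ν(pᵢ) = g(a) D + Σ τᵢ ω(pᵢ) (g(pᵢ) - g(a))` and `|g(a)| ≤ c₀ + c₂`, so it suffices to bound
the second sum by `8 c₂ |D|` for a suitable anchor. Since `g'(0) = 0`, `|g'(u)| ≤ c₂ u`, whence
`|g s - g t| ≤ c₂ max(s,t) |s - t|`. Up to a global sign and the swap `x ↔ y` there are three
patterns. For `(+,+,+)` all terms are nonnegative and the anchor `0` works. For `(+,+,-)` the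
identity `ω u + ω v - ω(u+v) = 8 sin(πu/4) sin(πv/4) sin(π(u+v)/4)` and Jordan's inequality give
`D ≥ xy(x+y)`, which dominates the second sum anchored at `z`; the pattern `(+,-,+)` is the same
identity at `(x, 2-x-y)`, anchored at `y`. Hence `h₁(ν) ≤ c₀ + 9 c₂`.
-/

open Set

lemma omegaFn_two_sub (t : ℝ) : omegaFn (2 - t) = omegaFn t := by
  unfold omegaFn
  rw [show π * (2 - t) / 2 = π - π * t / 2 by ring, sin_pi_sub]

lemma omegaFn_zfun (x y : ℝ) : omegaFn (zfun x y) = omegaFn (x + y) := by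
  unfold zfun
  split_ifs
  · rfl
  · rw [sub_sub, omegaFn_two_sub]

lemma omegaFn_nonneg {t : ℝ} (h0 : 0 ≤ t) (h2 : t ≤ 2) : 0 ≤ omegaFn t := by
  have := sin_nonneg_of_nonneg_of_le_pi (x := π * t / 2) (by positivity) (by nlinarith [pi_pos])
  unfold omegaFn
  linarith

lemma omegaFn_le_four_mul {t : ℝ} (h0 : 0 ≤ t) : omegaFn t ≤ 4 * t := by
  have := sin_le (by positivity : 0 ≤ π * t / 2)
  unfold omegaFn
  nlinarith [pi_le_four]

lemma abs_omegaFn_mul_le {t d A B : ℝ} (h0 : 0 ≤ t) (h2 : t ≤ 2) (hA : omegaFn t ≤ A)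
    (hd : |d| ≤ B) : |omegaFn t * d| ≤ A * B := by
  have hω := omegaFn_nonneg h0 h2
  rw [abs_mul, abs_of_nonneg hω]
  exact mul_le_mul hA hd (abs_nonneg _) (hω.trans hA)

lemma half_le_sin_pi_mul_div_four {t : ℝ} (h0 : 0 ≤ t) (h2 : t ≤ 2) :
    t / 2 ≤ sin (π * t / 4) := by
  have := mul_le_sin (x := π * t / 4) (by positivity) (by nlinarith [pi_pos])
  calc t / 2 = 2 / π * (π * t / 4) := by field_simp; ring
    _ ≤ sin (π * t / 4) := this

lemma sin_two_mul_add_sin_two_mul_sub (a b : ℝ) :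
    sin (2 * a) + sin (2 * b) - sin (2 * a + 2 * b) = 4 * sin a * sin b * sin (a + b) := by
  rw [← mul_add, sin_two_mul, sin_two_mul, sin_two_mul, sin_add, cos_add]
  linear_combination (-2 * sin a * cos a) * sin_sq_add_cos_sq b
    + (-2 * sin b * cos b) * sin_sq_add_cos_sq a

lemma omegaFn_add_omegaFn_sub (u v : ℝ) :
    omegaFn u + omegaFn v - omegaFn (u + v)
      = 8 * sin (π * u / 4) * sin (π * v / 4) * sin (π * (u + v) / 4) := by
  have h := sin_two_mul_add_sin_two_mul_sub (π * u / 4) (π * v / 4)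
  rw [show π * (u + v) / 4 = π * u / 4 + π * v / 4 by ring]
  unfold omegaFn
  rw [show π * u / 2 = 2 * (π * u / 4) by ring, show π * v / 2 = 2 * (π * v / 4) by ring,
    show π * (u + v) / 2 = 2 * (π * u / 4) + 2 * (π * v / 4) by ring]
  linear_combination 2 * h

lemma mul_mul_add_le_omegaFn_add_omegaFn_sub {u v : ℝ} (hu : 0 ≤ u) (hv : 0 ≤ v)
    (huv : u + v ≤ 2) : u * v * (u + v) ≤ omegaFn u + omegaFn v - omegaFn (u + v) := by
  have hu' := half_le_sin_pi_mul_div_four hu (by linarith)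
  have hv' := half_le_sin_pi_mul_div_four hv (by linarith)
  have huv' := half_le_sin_pi_mul_div_four (add_nonneg hu hv) huv
  rw [omegaFn_add_omegaFn_sub]
  calc u * v * (u + v) = 8 * (u / 2) * (v / 2) * ((u + v) / 2) := by ring
    _ ≤ 8 * sin (π * u / 4) * sin (π * v / 4) * sin (π * (u + v) / 4) := by
      gcongr
      all_goals apply_rules [mul_nonneg] <;> linarith

lemma zfun_comm (x y : ℝ) : zfun x y = zfun y x := by
  simp only [zfun, add_comm x y, sub_right_comm 2 x y]

lemma zfun_mem {x y : ℝ} (hx : x ∈ Icc (0 : ℝ) 1) (hy : y ∈ Icc (0 : ℝ) 1) :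
    zfun x y ∈ Icc (0 : ℝ) 1 := by
  obtain ⟨hx0, hx1⟩ := hx
  obtain ⟨hy0, hy1⟩ := hy
  unfold zfun
  split_ifs <;> constructor <;> linarith

lemma abs_sub_zfun_le {x y : ℝ} (hx : x ∈ Icc (0 : ℝ) 1) (hy : y ∈ Icc (0 : ℝ) 1) :
    |x - zfun x y| ≤ y := by
  obtain ⟨hx0, hx1⟩ := hx
  obtain ⟨hy0, hy1⟩ := hy
  unfold zfun
  split_ifs <;> rw [abs_le] <;> constructor <;> linarith

lemma max_mul_abs_sub_zfun_le {x y : ℝ} (hx : x ∈ Icc (0 : ℝ) 1) (hy : y ∈ Icc (0 : ℝ) 1) :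
    max x (zfun x y) * |x - zfun x y| ≤ (x + y) * y := by
  have hd := abs_sub_zfun_le hx hy
  obtain ⟨hx0, hx1⟩ := hx
  obtain ⟨hy0, hy1⟩ := hy
  unfold zfun at hd ⊢
  split_ifs at hd ⊢ with h
  · rw [max_eq_right (by linarith)]
    exact mul_le_mul_of_nonneg_left hd (by linarith)
  · have hmax : max x (2 - x - y) ≤ 1 := max_le hx1 (by linarith)
    calc max x (2 - x - y) * |x - (2 - x - y)| ≤ 1 * y :=
          mul_le_mul hmax hd (abs_nonneg _) zero_le_one
      _ ≤ (x + y) * y := by nlinarith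

def tripleSum (τ₁ τ₂ τ₃ : ℝ) (f : ℝ → ℝ) (x y : ℝ) : ℝ :=
  τ₁ * f x + τ₂ * f y + τ₃ * f (zfun x y)

section tripleSum

variable {τ₁ τ₂ τ₃ x y : ℝ} {f : ℝ → ℝ}

lemma tripleSum_neg : tripleSum (-τ₁) (-τ₂) (-τ₃) f x y = -tripleSum τ₁ τ₂ τ₃ f x y := by
  simp only [tripleSum]
  ring

lemma tripleSum_swap : tripleSum τ₁ τ₂ τ₃ f y x = tripleSum τ₂ τ₁ τ₃ f x y := by
  simp only [tripleSum, zfun_comm y x]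
  ring

lemma tripleSum_mul (g : ℝ → ℝ) (a : ℝ) :
    tripleSum τ₁ τ₂ τ₃ (fun t => f t * g t) x y
      = g a * tripleSum τ₁ τ₂ τ₃ f x y + tripleSum τ₁ τ₂ τ₃ (fun t => f t * (g t - g a)) x y := by
  simp only [tripleSum]
  ring

lemma tripleSum_congr {f' : ℝ → ℝ} (hf : ∀ t ∈ Icc (0 : ℝ) 1, f t = f' t) (hx : x ∈ Icc (0 : ℝ) 1)
    (hy : y ∈ Icc (0 : ℝ) 1) : tripleSum τ₁ τ₂ τ₃ f x y = tripleSum τ₁ τ₂ τ₃ f' x y := by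
  simp only [tripleSum, hf x hx, hf y hy, hf _ (zfun_mem hx hy)]

end tripleSum

def WeightedLipschitz (K : ℝ) (g : ℝ → ℝ) : Prop :=
  ∀ s ∈ Icc (0 : ℝ) 1, ∀ t ∈ Icc (0 : ℝ) 1, |g s - g t| ≤ K * (max s t * |s - t|)

namespace WeightedLipschitz

variable {K : ℝ} {g : ℝ → ℝ} {τ₁ τ₂ τ₃ x y : ℝ}

lemma abs_sub_le (hg : WeightedLipschitz K g) (hK : 0 ≤ K) {s t : ℝ} (hs : s ∈ Icc (0 : ℝ) 1)
    (ht : t ∈ Icc (0 : ℝ) 1) : |g s - g t| ≤ K * |s - t| :=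
  (hg s hs t ht).trans <| mul_le_mul_of_nonneg_left
    (mul_le_of_le_one_left (abs_nonneg _) (max_le hs.2 ht.2)) hK

lemma abs_sub_apply_zero_le (hg : WeightedLipschitz K g) (hK : 0 ≤ K) {t : ℝ}
    (ht : t ∈ Icc (0 : ℝ) 1) : |g t - g 0| ≤ K := by
  have := hg.abs_sub_le hK ht ⟨le_rfl, zero_le_one⟩
  rw [sub_zero, abs_of_nonneg ht.1] at this
  exact this.trans (mul_le_of_le_one_right hK ht.2)

lemma abs_tripleSum_le_of_anchor (hg : WeightedLipschitz K g) (hK : 0 ≤ K) {a : ℝ}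
    (ha : a ∈ Icc (0 : ℝ) 1)
    (hrem : |tripleSum τ₁ τ₂ τ₃ (fun t => omegaFn t * (g t - g a)) x y|
      ≤ 8 * K * |tripleSum τ₁ τ₂ τ₃ omegaFn x y|) :
    |tripleSum τ₁ τ₂ τ₃ (fun t => omegaFn t * g t) x y|
      ≤ (|g 0| + 9 * K) * |tripleSum τ₁ τ₂ τ₃ omegaFn x y| := by
  have hga : |g a| ≤ |g 0| + K := by
    linarith [abs_sub_abs_le_abs_sub (g a) (g 0), hg.abs_sub_apply_zero_le hK ha]
  rw [tripleSum_mul _ a]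
  calc _ ≤ |g a| * |tripleSum τ₁ τ₂ τ₃ omegaFn x y|
        + |tripleSum τ₁ τ₂ τ₃ (fun t => omegaFn t * (g t - g a)) x y| := by
        rw [← abs_mul]
        exact abs_add_le _ _
    _ ≤ (|g 0| + K) * |tripleSum τ₁ τ₂ τ₃ omegaFn x y|
        + 8 * K * |tripleSum τ₁ τ₂ τ₃ omegaFn x y| := by gcongr
    _ = _ := by ring

lemma abs_tripleSum_one_one_one (hg : WeightedLipschitz K g) (hK : 0 ≤ K)
    (hx : x ∈ Icc (0 : ℝ) 1) (hy : y ∈ Icc (0 : ℝ) 1) :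
    |tripleSum 1 1 1 (fun t => omegaFn t * g t) x y|
      ≤ (|g 0| + 9 * K) * |tripleSum 1 1 1 omegaFn x y| := by
  have hz := zfun_mem hx hy
  have hterm : ∀ t ∈ Icc (0 : ℝ) 1, |omegaFn t * (g t - g 0)| ≤ omegaFn t * K := fun t ht =>
    abs_omegaFn_mul_le ht.1 (by linarith [ht.2]) le_rfl (hg.abs_sub_apply_zero_le hK ht)
  have hD : 0 ≤ tripleSum 1 1 1 omegaFn x y := by
    simp only [tripleSum, one_mul]
    linarith [omegaFn_nonneg hx.1 (by linarith [hx.2]), omegaFn_nonneg hy.1 (by linarith [hy.2]),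
      omegaFn_nonneg hz.1 (by linarith [hz.2])]
  refine hg.abs_tripleSum_le_of_anchor hK ⟨le_rfl, zero_le_one⟩ ?_
  rw [abs_of_nonneg hD]
  calc _ ≤ K * tripleSum 1 1 1 omegaFn x y := by
        simp only [tripleSum, one_mul]
        refine (abs_add_three _ _ _).trans ?_
        linarith [hterm x hx, hterm y hy, hterm _ hz]
    _ ≤ 8 * K * tripleSum 1 1 1 omegaFn x y := by nlinarith

lemma abs_tripleSum_one_one_neg_one (hg : WeightedLipschitz K g) (hK : 0 ≤ K)
    (hx : x ∈ Icc (0 : ℝ) 1) (hy : y ∈ Icc (0 : ℝ) 1) :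
    |tripleSum 1 1 (-1) (fun t => omegaFn t * g t) x y|
      ≤ (|g 0| + 9 * K) * |tripleSum 1 1 (-1) omegaFn x y| := by
  have hz := zfun_mem hx hy
  have hD : x * y * (x + y) ≤ tripleSum 1 1 (-1) omegaFn x y := by
    have := mul_mul_add_le_omegaFn_add_omegaFn_sub hx.1 hy.1 (by linarith [hx.2, hy.2])
    simp only [tripleSum, omegaFn_zfun]
    linarith
  have hxz : |g x - g (zfun x y)| ≤ K * ((x + y) * y) :=
    (hg x hx _ hz).trans (mul_le_mul_of_nonneg_left (max_mul_abs_sub_zfun_le hx hy) hK)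
  have hyz : |g y - g (zfun x y)| ≤ K * ((x + y) * x) := by
    have := max_mul_abs_sub_zfun_le hy hx
    rw [← zfun_comm, add_comm y x] at this
    exact (hg y hy _ hz).trans (mul_le_mul_of_nonneg_left this hK)
  refine hg.abs_tripleSum_le_of_anchor hK hz ?_
  have hrem : tripleSum 1 1 (-1) (fun t => omegaFn t * (g t - g (zfun x y))) x y
      = omegaFn x * (g x - g (zfun x y)) + omegaFn y * (g y - g (zfun x y)) := by
    simp only [tripleSum, sub_self]
    ring
  have hxy : 0 ≤ x * y * (x + y) := by have := hx.1; have := hy.1; positivity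
  rw [hrem, abs_of_nonneg (hxy.trans hD)]
  calc _ ≤ 4 * x * (K * ((x + y) * y)) + 4 * y * (K * ((x + y) * x)) :=
        (abs_add_le _ _).trans <| add_le_add
          (abs_omegaFn_mul_le hx.1 (by linarith [hx.2]) (omegaFn_le_four_mul hx.1) hxz)
          (abs_omegaFn_mul_le hy.1 (by linarith [hy.2]) (omegaFn_le_four_mul hy.1) hyz)
    _ = 8 * K * (x * y * (x + y)) := by ring
    _ ≤ _ := by gcongr

lemma abs_tripleSum_one_neg_one_one (hg : WeightedLipschitz K g) (hK : 0 ≤ K)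
    (hx : x ∈ Icc (0 : ℝ) 1) (hy : y ∈ Icc (0 : ℝ) 1) :
    |tripleSum 1 (-1) 1 (fun t => omegaFn t * g t) x y|
      ≤ (|g 0| + 9 * K) * |tripleSum 1 (-1) 1 omegaFn x y| := by
  obtain ⟨hx0, hx1⟩ := hx
  obtain ⟨hy0, hy1⟩ := hy
  have hz := zfun_mem ⟨hx0, hx1⟩ ⟨hy0, hy1⟩
  have hωz : omegaFn (zfun x y) = omegaFn (2 - x - y) := by
    rw [omegaFn_zfun, sub_sub, omegaFn_two_sub]
  -- the substitution `v = 2 - x - y` turns this sign pattern into the previous one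
  have hD : x * (2 - x - y) ≤ tripleSum 1 (-1) 1 omegaFn x y := by
    have := mul_mul_add_le_omegaFn_add_omegaFn_sub hx0 (by linarith : 0 ≤ 2 - x - y)
      (by linarith)
    rw [show x + (2 - x - y) = 2 - y by ring, omegaFn_two_sub] at this
    simp only [tripleSum, hωz]
    nlinarith [mul_nonneg hx0 (by linarith : 0 ≤ 2 - x - y)]
  have hxy : |g x - g y| ≤ K * (2 - x - y) :=
    (hg.abs_sub_le hK ⟨hx0, hx1⟩ ⟨hy0, hy1⟩).trans <| mul_le_mul_of_nonneg_left
      (abs_le.2 ⟨by linarith, by linarith⟩) hK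
  have hzy : |g (zfun x y) - g y| ≤ K * x := by
    refine (hg.abs_sub_le hK hz ⟨hy0, hy1⟩).trans (mul_le_mul_of_nonneg_left ?_ hK)
    rw [abs_sub_comm, zfun_comm]
    exact abs_sub_zfun_le ⟨hy0, hy1⟩ ⟨hx0, hx1⟩
  refine hg.abs_tripleSum_le_of_anchor hK ⟨hy0, hy1⟩ ?_
  have hrem : tripleSum 1 (-1) 1 (fun t => omegaFn t * (g t - g y)) x y
      = omegaFn x * (g x - g y) + omegaFn (zfun x y) * (g (zfun x y) - g y) := by
    simp only [tripleSum, sub_self]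
    ring
  have hxv : 0 ≤ x * (2 - x - y) := mul_nonneg hx0 (by linarith)
  rw [hrem, abs_of_nonneg (hxv.trans hD)]
  calc _ ≤ 4 * x * (K * (2 - x - y)) + 4 * (2 - x - y) * (K * x) :=
        (abs_add_le _ _).trans <| add_le_add
          (abs_omegaFn_mul_le hx0 (by linarith) (omegaFn_le_four_mul hx0) hxy)
          (abs_omegaFn_mul_le hz.1 (by linarith [hz.2])
            (hωz ▸ omegaFn_le_four_mul (by linarith)) hzy)
    _ = 8 * K * (x * (2 - x - y)) := by ring
    _ ≤ _ := by gcongr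

lemma abs_tripleSum_le (hg : WeightedLipschitz K g) (hK : 0 ≤ K) (h₁ : τ₁ = 1 ∨ τ₁ = -1)
    (h₂ : τ₂ = 1 ∨ τ₂ = -1) (h₃ : τ₃ = 1 ∨ τ₃ = -1) (hx : x ∈ Icc (0 : ℝ) 1)
    (hy : y ∈ Icc (0 : ℝ) 1) :
    |tripleSum τ₁ τ₂ τ₃ (fun t => omegaFn t * g t) x y|
      ≤ (|g 0| + 9 * K) * |tripleSum τ₁ τ₂ τ₃ omegaFn x y| := by
  have neg : ∀ {a b c : ℝ}, |tripleSum a b c (fun t => omegaFn t * g t) x y|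
      ≤ (|g 0| + 9 * K) * |tripleSum a b c omegaFn x y| →
      |tripleSum (-a) (-b) (-c) (fun t => omegaFn t * g t) x y|
        ≤ (|g 0| + 9 * K) * |tripleSum (-a) (-b) (-c) omegaFn x y| := by
    intro a b c h
    rwa [tripleSum_neg, tripleSum_neg, abs_neg, abs_neg]
  have hppp := hg.abs_tripleSum_one_one_one hK hx hy
  have hppm := hg.abs_tripleSum_one_one_neg_one hK hx hy
  have hpmp := hg.abs_tripleSum_one_neg_one_one hK hx hy
  have hmpp : |tripleSum (-1) 1 1 (fun t => omegaFn t * g t) x y|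
      ≤ (|g 0| + 9 * K) * |tripleSum (-1) 1 1 omegaFn x y| := by
    have := hg.abs_tripleSum_one_neg_one_one hK hy hx
    simpa only [tripleSum_swap (x := x) (y := y)] using this
  rcases h₁ with rfl | rfl <;> rcases h₂ with rfl | rfl <;> rcases h₃ with rfl | rfl
  · exact hppp
  · exact hppm
  · exact hpmp
  · simpa only [neg_neg] using neg hmpp
  · exact hmpp
  · simpa only [neg_neg] using neg hpmp
  · simpa only [neg_neg] using neg hppm
  · exact neg hppp

end WeightedLipschitz

section c2sup

variable {g : ℝ → ℝ}

lemma c2sup_nonneg (g : ℝ → ℝ) : 0 ≤ c2sup g :=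
  Real.iSup_nonneg fun _ => abs_nonneg _

lemma abs_secondDerivOn_le_c2sup (hg : ContDiffOn ℝ 2 g (Icc 0 1)) {t : ℝ}
    (ht : t ∈ Icc (0 : ℝ) 1) : |secondDerivOn g t| ≤ c2sup g := by
  have hUD : UniqueDiffOn ℝ (Icc (0 : ℝ) 1) := uniqueDiffOn_Icc zero_lt_one
  have hcont : ContinuousOn (secondDerivOn g) (Icc 0 1) :=
    (hg.derivWithin hUD (m := 1) (by norm_num)).continuousOn_derivWithin hUD le_rfl
  refine le_ciSup (f := fun u : Icc (0 : ℝ) 1 => |secondDerivOn g u|) ?_ ⟨t, ht⟩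
  have := isCompact_Icc.bddAbove_image hcont.abs
  rwa [image_eq_range] at this

lemma abs_derivWithin_le_c2sup_mul (hg : ContDiffOn ℝ 2 g (Icc 0 1))
    (hg0 : derivWithin g (Icc 0 1) 0 = 0) {t : ℝ} (ht : t ∈ Icc (0 : ℝ) 1) :
    |derivWithin g (Icc 0 1) t| ≤ c2sup g * t := by
  have hd : DifferentiableOn ℝ (derivWithin g (Icc 0 1)) (Icc 0 1) :=
    (hg.derivWithin (uniqueDiffOn_Icc zero_lt_one) (m := 1) (by norm_num)).differentiableOn
      one_ne_zero
  have := (convex_Icc (0 : ℝ) 1).norm_image_sub_le_of_norm_derivWithin_le hd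
    (fun u hu => abs_secondDerivOn_le_c2sup hg hu) ⟨le_rfl, zero_le_one⟩ ht
  simpa [hg0, abs_of_nonneg ht.1] using this

lemma weightedLipschitz_c2sup (hg : ContDiffOn ℝ 2 g (Icc 0 1))
    (hg0 : derivWithin g (Icc 0 1) 0 = 0) : WeightedLipschitz (c2sup g) g := by
  intro s hs t ht
  have hsub : uIcc s t ⊆ Icc 0 1 := uIcc_subset_Icc hs ht
  have hd := hg.differentiableOn two_ne_zero
  have hbound : ∀ u ∈ uIcc s t, ‖derivWithin g (Icc 0 1) u‖ ≤ c2sup g * max s t := fun u hu =>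
    (abs_derivWithin_le_c2sup_mul hg hg0 (hsub hu)).trans
      (mul_le_mul_of_nonneg_left hu.2 (c2sup_nonneg g))
  have := (convex_uIcc s t).norm_image_sub_le_of_norm_hasDerivWithin_le
    (fun u hu => (hd u (hsub hu)).hasDerivWithinAt.mono hsub) hbound right_mem_uIcc left_mem_uIcc
  simpa only [Real.norm_eq_abs, mul_assoc] using this

end c2sup

lemma h1_le_ofReal {ν : ℝ → ℝ} {M : ℝ}
    (h : ∀ τ₁ τ₂ τ₃ x y : ℝ, (τ₁ = 1 ∨ τ₁ = -1) → (τ₂ = 1 ∨ τ₂ = -1) → (τ₃ = 1 ∨ τ₃ = -1) →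
      x ∈ Icc (0 : ℝ) 1 → y ∈ Icc (0 : ℝ) 1 →
      |tripleSum τ₁ τ₂ τ₃ ν x y| ≤ M * |tripleSum τ₁ τ₂ τ₃ omegaFn x y|) :
    h1 ν ≤ ENNReal.ofReal M := by
  refine sSup_le ?_
  rintro r ⟨τ₁, τ₂, τ₃, x, y, h₁, h₂, h₃, hx, hy, hD, rfl⟩
  exact ENNReal.ofReal_le_ofReal ((div_le_iff₀ (abs_pos.2 hD)).2 (h τ₁ τ₂ τ₃ x y h₁ h₂ h₃ hx hy))

/-- Theorem `teor:funzionale`, first part: if `g = ν/ω` extends to a `C²`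
function on `[0,1]` with `g'(0) = 0`, then `h₁(ν) ≤ C (c₀ + c₂)` with `C` independent of `ν`. -/
theorem stmt1 :
    ∃ C : ℝ, 0 < C ∧
      ∀ ν g : ℝ → ℝ,
        ContDiffOn ℝ 2 g (Set.Icc 0 1) →
        derivWithin g (Set.Icc 0 1) 0 = 0 →
        (∀ x ∈ Set.Icc (0 : ℝ) 1, ν x = omegaFn x * g x) →
        h1 ν ≤ ENNReal.ofReal (C * (|g 0| + c2sup g)) := by
  refine ⟨9, by norm_num, fun ν g hg hg0 hν => ?_⟩
  have hK := c2sup_nonneg g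
  have hlip := weightedLipschitz_c2sup hg hg0
  calc h1 ν ≤ ENNReal.ofReal (|g 0| + 9 * c2sup g) :=
        h1_le_ofReal fun τ₁ τ₂ τ₃ x y h₁ h₂ h₃ hx hy => by
          rw [tripleSum_congr hν hx hy]
          exact hlip.abs_tripleSum_le hK h₁ h₂ h₃ hx hy
    _ ≤ ENNReal.ofReal (9 * (|g 0| + c2sup g)) :=
        ENNReal.ofReal_le_ofReal (by linarith [abs_nonneg (g 0)])

end
end

section
/- Let ν: [0,1] → ℝ be such that g(x) := ν(x)/ω(x) extends to a C² function on [0,1] with g'(0) ≠ 0. Then h₁(ν) is not bounded, i.e. the supremum defining h₁(ν) equals +∞. -/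
noncomputable section

open Real

/-!
On the diagonal `x = y ≤ 1/2` we have `z = 2x`, and with the signs `(1, 1, -1)` the identity
`ω(2x) = 2 ω(x) cos(πx/2)` turns the quotient defining `h₁(ν)` into
`|g(x) - cos(πx/2) g(2x)| / (1 - cos(πx/2))`. The numerator is `-g'(0) x + o(x)`, the denominator
is `O(x²)`, so the quotient tends to `+∞` as `x → 0⁺`.
-/

open Filter Set Topology

lemma one_sub_cos_pos {y : ℝ} (hy : y ≠ 0) (hyπ : |y| ≤ π) : 0 < 1 - cos y := by
  have := cos_le_one_sub_mul_cos_sq hyπ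
  have : 0 < 2 / π ^ 2 * y ^ 2 := by positivity
  linarith

lemma tendsto_one_sub_cos_mul_div_nhdsGT (a : ℝ) :
    Tendsto (fun x => (1 - cos (a * x)) / x) (𝓝[>] 0) (𝓝 0) := by
  have hupper : Tendsto (fun x : ℝ => a ^ 2 / 2 * x) (𝓝[>] 0) (𝓝 0) :=
    ((continuous_const_mul _).tendsto' 0 0 (mul_zero _)).mono_left nhdsWithin_le_nhds
  refine tendsto_of_tendsto_of_tendsto_of_le_of_le' tendsto_const_nhds hupper ?_ ?_
  all_goals filter_upwards [self_mem_nhdsWithin] with x (hx : 0 < x)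
  · exact div_nonneg (sub_nonneg.2 (cos_le_one _)) hx.le
  · rw [div_le_iff₀ hx]
    nlinarith [one_sub_sq_div_two_le_cos (x := a * x)]

lemma tendsto_div_one_sub_cos_mul_atTop {a : ℝ} (ha : a ≠ 0) :
    Tendsto (fun x => x / (1 - cos (a * x))) (𝓝[>] 0) atTop := by
  have hpos : ∀ᶠ x in 𝓝[>] (0 : ℝ), 0 < (1 - cos (a * x)) / x := by
    filter_upwards [Ioo_mem_nhdsGT (div_pos pi_pos (abs_pos.2 ha))] with x hx
    refine div_pos (one_sub_cos_pos (mul_ne_zero ha hx.1.ne') ?_) hx.1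
    rw [abs_mul, abs_of_pos hx.1]
    exact ((lt_div_iff₀' (abs_pos.2 ha)).1 hx.2).le
  refine (tendsto_nhdsWithin_iff.2 ⟨tendsto_one_sub_cos_mul_div_nhdsGT a, hpos⟩
    ).inv_tendsto_nhdsGT_zero.congr fun x => ?_
  rw [Pi.inv_apply, inv_div]

lemma tendsto_two_mul_nhdsGT_zero : Tendsto (fun x : ℝ => 2 * x) (𝓝[>] 0) (𝓝[>] 0) := by
  refine tendsto_nhdsWithin_iff.2 ⟨?_, ?_⟩
  · exact ((continuous_const_mul _).tendsto' 0 0 (mul_zero _)).mono_left nhdsWithin_le_nhds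
  · filter_upwards [self_mem_nhdsWithin] with x (hx : 0 < x)
    exact mul_pos two_pos hx

section

variable {g : ℝ → ℝ} {d : ℝ}

lemma tendsto_sub_cos_mul_comp_two_mul_div_of_hasDerivWithinAt
    (hg : HasDerivWithinAt g d (Ioi 0) 0) (a : ℝ) :
    Tendsto (fun x => (g x - cos (a * x) * g (2 * x)) / x) (𝓝[>] 0) (𝓝 (-d)) := by
  have hslope : Tendsto (slope g 0) (𝓝[>] 0) (𝓝 d) :=
    (hasDerivWithinAt_iff_tendsto_slope' (lt_irrefl 0)).1 hg
  have hcos : Tendsto (fun x => cos (a * x)) (𝓝[>] 0) (𝓝 1) :=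
    ((by fun_prop : Continuous fun x => cos (a * x)).tendsto' 0 1 (by simp)).mono_left
      nhdsWithin_le_nhds
  -- `g x - c g(2x) = (g x - g 0) - c (g (2x) - g 0) + (1 - c) g 0`
  have hlim := (hslope.sub (hcos.mul ((hslope.comp tendsto_two_mul_nhdsGT_zero).const_mul 2))).add
    ((tendsto_one_sub_cos_mul_div_nhdsGT a).mul_const (g 0))
  rw [show d - 1 * (2 * d) + 0 * g 0 = -d by ring] at hlim
  refine hlim.congr' ?_
  filter_upwards [self_mem_nhdsWithin] with x (hx : 0 < x)
  have := hx.ne'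
  simp only [Function.comp_apply, slope_def_field]
  field_simp
  ring

lemma tendsto_abs_sub_cos_mul_comp_two_mul_div_one_sub_cos_of_hasDerivWithinAt
    (hg : HasDerivWithinAt g d (Ioi 0) 0) (hd : d ≠ 0) {a : ℝ} (ha : a ≠ 0) :
    Tendsto (fun x => |g x - cos (a * x) * g (2 * x)| / (1 - cos (a * x))) (𝓝[>] 0) atTop := by
  have hnum : Tendsto (fun x => |(g x - cos (a * x) * g (2 * x)) / x|) (𝓝[>] 0) (𝓝 |d|) := by
    simpa using (tendsto_sub_cos_mul_comp_two_mul_div_of_hasDerivWithinAt hg a).abs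
  refine (Tendsto.pos_mul_atTop (abs_pos.2 hd) hnum
    (tendsto_div_one_sub_cos_mul_atTop ha)).congr' ?_
  filter_upwards [self_mem_nhdsWithin] with x (hx : 0 < x)
  rw [abs_div, abs_of_pos hx, div_mul_div_cancel₀ hx.ne']

end

lemma omegaFn_pos {x : ℝ} (h0 : 0 < x) (h2 : x < 2) : 0 < omegaFn x := by
  unfold omegaFn
  have := sin_pos_of_pos_of_lt_pi (x := π * x / 2) (by positivity) (by nlinarith [pi_pos])
  positivity

lemma omegaFn_two_mul (x : ℝ) : omegaFn (2 * x) = 2 * omegaFn x * cos (π / 2 * x) := by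
  simp only [omegaFn, show π * (2 * x) / 2 = 2 * (π * x / 2) by ring, sin_two_mul,
    show π / 2 * x = π * x / 2 by ring]
  ring

lemma zfun_self {x : ℝ} (hx : x ≤ 1 / 2) : zfun x x = 2 * x := by
  rw [zfun, if_pos (by linarith)]
  ring

lemma two_mul_omegaFn_sub_omegaFn_two_mul_pos {x : ℝ} (hx : x ∈ Ioc (0 : ℝ) (1 / 2)) :
    0 < 2 * omegaFn x - omegaFn (2 * x) := by
  have hω := omegaFn_pos hx.1 (by linarith [hx.2])
  have hcos : 0 < 1 - cos (π / 2 * x) := by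
    refine one_sub_cos_pos (by positivity [hx.1]) ?_
    rw [abs_of_pos (by positivity [hx.1])]
    nlinarith [pi_pos, hx.2]
  rw [omegaFn_two_mul]
  nlinarith

-- the term of `h₁` with signs `(1, 1, -1)` at `(x, x)`, where `z(x, x) = 2x`
lemma ofReal_diag_quotient_le_h1 (ν : ℝ → ℝ) {x : ℝ} (hx : x ∈ Ioc (0 : ℝ) (1 / 2)) :
    ENNReal.ofReal (|2 * ν x - ν (2 * x)| / |2 * omegaFn x - omegaFn (2 * x)|) ≤ h1 ν := by
  have hxI : x ∈ Icc (0 : ℝ) 1 := ⟨hx.1.le, by linarith [hx.2]⟩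
  refine le_sSup ⟨1, 1, -1, x, x, .inl rfl, .inl rfl, .inr rfl, hxI, hxI, ?_, ?_⟩
  all_goals rw [zfun_self hx.2]
  · linarith [two_mul_omegaFn_sub_omegaFn_two_mul_pos hx]
  · ring_nf

lemma h1_eq_top_of_tendsto_atTop {ν : ℝ → ℝ}
    (h : Tendsto (fun x => |2 * ν x - ν (2 * x)| / |2 * omegaFn x - omegaFn (2 * x)|)
      (𝓝[>] 0) atTop) :
    h1 ν = ⊤ := by
  refine top_le_iff.1 (le_of_tendsto (ENNReal.tendsto_ofReal_atTop.comp h) ?_)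
  filter_upwards [Ioc_mem_nhdsGT (by norm_num : (0 : ℝ) < 1 / 2)] with x hx
  exact ofReal_diag_quotient_le_h1 ν hx

lemma diag_quotient_eq {ν g : ℝ → ℝ}
    (hext : ∀ x ∈ Icc (0 : ℝ) 1, ν x = omegaFn x * g x)
    {x : ℝ} (hx : x ∈ Ioc (0 : ℝ) (1 / 2)) :
    |2 * ν x - ν (2 * x)| / |2 * omegaFn x - omegaFn (2 * x)| =
      |g x - cos (π / 2 * x) * g (2 * x)| / (1 - cos (π / 2 * x)) := by
  have h2ω : 0 < 2 * omegaFn x := by linarith [omegaFn_pos hx.1 (by linarith [hx.2])]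
  have hnum : 2 * ν x - ν (2 * x) = 2 * omegaFn x * (g x - cos (π / 2 * x) * g (2 * x)) := by
    rw [hext x ⟨hx.1.le, by linarith [hx.2]⟩,
      hext (2 * x) ⟨by linarith [hx.1], by linarith [hx.2]⟩, omegaFn_two_mul]
    ring
  have hden : 2 * omegaFn x - omegaFn (2 * x) = 2 * omegaFn x * (1 - cos (π / 2 * x)) := by
    rw [omegaFn_two_mul]
    ring
  rw [hnum, hden, abs_mul (2 * omegaFn x), abs_mul (2 * omegaFn x), abs_of_pos h2ω,
    abs_of_nonneg (sub_nonneg.2 (cos_le_one _)), mul_div_mul_left _ _ h2ω.ne']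

theorem stmt2_general (ν g : ℝ → ℝ)
    (hg'0 : derivWithin g (Set.Icc 0 1) 0 ≠ 0)
    (hext : ∀ x ∈ Set.Icc (0 : ℝ) 1, ν x = omegaFn x * g x) :
    h1 ν = ⊤ := by
  have hderiv : HasDerivWithinAt g (derivWithin g (Icc 0 1) 0) (Ioi 0) 0 :=
    ((differentiableWithinAt_of_derivWithin_ne_zero hg'0).hasDerivWithinAt.mono_of_mem_nhdsWithin
      (Icc_mem_nhdsGE one_pos)).Ioi_of_Ici
  refine h1_eq_top_of_tendsto_atTop
    ((tendsto_abs_sub_cos_mul_comp_two_mul_div_one_sub_cos_of_hasDerivWithinAt hderiv hg'0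
      (by positivity : π / 2 ≠ 0)).congr' ?_)
  filter_upwards [Ioc_mem_nhdsGT (by norm_num : (0 : ℝ) < 1 / 2)] with x hx
  exact (diag_quotient_eq hext hx).symm

/-- Theorem `teor:funzionale`, second part: if `g = ν/ω` extends to a `C²`
function on `[0,1]` with `g'(0) ≠ 0`, then `h₁(ν)` is unbounded. -/
theorem stmt2 (ν g : ℝ → ℝ)
    (hg : ContDiffOn ℝ 2 g (Set.Icc 0 1))
    (hg'0 : derivWithin g (Set.Icc 0 1) 0 ≠ 0)
    (hext : ∀ x ∈ Set.Icc (0 : ℝ) 1, ν x = omegaFn x * g x) :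
    h1 ν = ⊤ :=
  stmt2_general ν g hg'0 hext

end
end

section
/- Let s ≥ 1 and let τ^{(1)},…,τ^{(S₁)} ∈ {−1,0,1}^{2s} be a 2s-admissible collection, i.e. their supports are pairwise disjoint and their union is {1,…,2s}. Let τ̃ ∈ {−1,0,1}^{2s} have support exactly {1,…,s} (τ̃_i ≠ 0 for i ≤ s and τ̃_i = 0 for i > s). If there exists an index ī such that both P₁τ^{(ī)} ≠ 0 and P₂τ^{(ī)} ≠ 0, where P₁, P₂ are the projections of ℝ^{2s} = ℝ^s ⊕ ℝ^s onto the first and second factor, then τ̃ does not belong to the linear span (over ℝ) of τ^{(1)},…,τ^{(S₁)}. -/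
/-!
Because the supports are disjoint, on the support of a single member `τ i` any linear
combination `∑ c k • τ k` coincides with `c i • τ i`. Hence a vector in the span is either
zero on the whole support of `τ i` or nonzero on the whole of it. A mixing member meets
both blocks, so `τ̃`, which is nonzero on the first block and zero on the second, is not in
the span.
-/

section DisjointSupports

variable {ι κ R : Type*} [Fintype ι] [Semiring R] {τ : ι → κ → R}

theorem sum_smul_apply_eq_mul_of_disjoint_support
    (hdisj : ∀ i i', i ≠ i' → ∀ j, τ i j = 0 ∨ τ i' j = 0)
    (c : ι → R) {i : ι} {j : κ} (hj : τ i j ≠ 0) :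
    (∑ k, c k • τ k) j = c i * τ i j := by
  rw [Finset.sum_apply, Finset.sum_eq_single_of_mem i (Finset.mem_univ i)]
  · rfl
  · intro k _ hki
    rcases hdisj k i hki j with h0 | h0
    · simp [h0]
    · exact absurd h0 hj

theorem apply_ne_zero_of_mem_span_of_disjoint_support [NoZeroDivisors R]
    (hdisj : ∀ i i', i ≠ i' → ∀ j, τ i j = 0 ∨ τ i' j = 0)
    {v : κ → R} (hv : v ∈ Submodule.span R (Set.range τ))
    {i : ι} {j₁ j₂ : κ} (h₁ : τ i j₁ ≠ 0) (h₂ : τ i j₂ ≠ 0) (hv₁ : v j₁ ≠ 0) :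
    v j₂ ≠ 0 := by
  obtain ⟨c, rfl⟩ := Submodule.mem_span_range_iff_exists_fun R |>.mp hv
  rw [sum_smul_apply_eq_mul_of_disjoint_support hdisj c h₁] at hv₁
  rw [sum_smul_apply_eq_mul_of_disjoint_support hdisj c h₂]
  exact mul_ne_zero (left_ne_zero_of_mul hv₁) h₂

end DisjointSupports

theorem stmt12_general (s S₁ : ℕ)
    (τ : Fin S₁ → (Fin (2 * s) → ℝ))
    (hdisj : ∀ i i', i ≠ i' → ∀ j, τ i j = 0 ∨ τ i' j = 0)
    (τt : Fin (2 * s) → ℝ)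
    (hτtsupp : ∀ j : Fin (2 * s), τt j ≠ 0 ↔ (j : ℕ) < s)
    (ibar : Fin S₁)
    (hP1 : ∃ j : Fin (2 * s), (j : ℕ) < s ∧ τ ibar j ≠ 0)
    (hP2 : ∃ j : Fin (2 * s), s ≤ (j : ℕ) ∧ τ ibar j ≠ 0) :
    τt ∉ Submodule.span ℝ (Set.range τ) := by
  intro hmem
  obtain ⟨j₁, hj₁, hτ₁⟩ := hP1
  obtain ⟨j₂, hj₂, hτ₂⟩ := hP2
  have hτt₂ : τt j₂ ≠ 0 :=
    apply_ne_zero_of_mem_span_of_disjoint_support hdisj hmem hτ₁ hτ₂ ((hτtsupp j₁).mpr hj₁)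
  exact absurd ((hτtsupp j₂).mp hτt₂) (not_lt.mpr hj₂)

/-- Lemma `ind.tau`: a vector supported on the first `s` coordinates
does not lie in the span of a `2s`-admissible collection one of whose members mixes the
two blocks. -/
theorem stmt12 (s S₁ : ℕ) (hs : 1 ≤ s)
    (τ : Fin S₁ → (Fin (2 * s) → ℝ))
    (hval : ∀ i j, τ i j = -1 ∨ τ i j = 0 ∨ τ i j = 1)
    (hdisj : ∀ i i', i ≠ i' → ∀ j, τ i j = 0 ∨ τ i' j = 0)
    (hcover : ∀ j, ∃ i, τ i j ≠ 0)
    (τt : Fin (2 * s) → ℝ)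
    (hτtval : ∀ j, τt j = -1 ∨ τt j = 0 ∨ τt j = 1)
    (hτtsupp : ∀ j : Fin (2 * s), τt j ≠ 0 ↔ (j : ℕ) < s)
    (ibar : Fin S₁)
    (hP1 : ∃ j : Fin (2 * s), (j : ℕ) < s ∧ τ ibar j ≠ 0)
    (hP2 : ∃ j : Fin (2 * s), s ≤ (j : ℕ) ∧ τ ibar j ≠ 0) :
    τt ∉ Submodule.span ℝ (Set.range τ) :=
  stmt12_general s S₁ τ hdisj τt hτtsupp ibar hP1 hP2
end
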